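/- Let C be a category, F : Cᵒᵖ × C ⥤ C a bifunctor, and suppose (A, B, f, g) is an initial dialgebra for F in which both f : F(B, A) ⟶ A and g : B ⟶ F(A, B) are isomorphisms, and suppose that the swapped quadruple (B, A, g⁻¹, f⁻¹) is also an initial dialgebra for F. Then the unique dialgebra morphism (h, h') from (A, B, f, g) to (B, A, g⁻¹, f⁻¹) satisfies h = h'; the morphism h : A ⟶ B is an isomorphism; and i := f ∘ F(h⁻¹, 𝟙_A) : F(A, A) ⟶ A is an isomorphism such that (A, A, i, i⁻¹) is an initial dialgebra for F. In particular F(A, A) ≅ A. -/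

import Mathlib

open CategoryTheory

universe v u

variable {C : Type u} [Category.{v} C]

/-- The object part of a bifunctor `F : Cᵒᵖ × C ⥤ C`, contravariant in its
first and covariant in its second argument: `Fobj F B A = F(B, A)`. -/
def Fobj (F : Cᵒᵖ × C ⥤ C) (B A : C) : C :=
  F.obj (Opposite.op B, A)

/-- The morphism part of a bifunctor `F : Cᵒᵖ × C ⥤ C`: for `h' : B₁ ⟶ B₀`
and `h : A₀ ⟶ A₁`, `Fmap F h' h = F(h', h) : F(B₀, A₀) ⟶ F(B₁, A₁)`. -/
def Fmap (F : Cᵒᵖ × C ⥤ C) {B₀ B₁ A₀ A₁ : C} (h' : B₁ ⟶ B₀) (h : A₀ ⟶ A₁) :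
    Fobj F B₀ A₀ ⟶ Fobj F B₁ A₁ :=
  F.map (h'.op, h)

/-- A dialgebra for `F : Cᵒᵖ × C ⥤ C` : a quadruple `(A, B, f, g)` with
`f : F(B, A) ⟶ A` and `g : B ⟶ F(A, B)`. -/
structure Dialgebra (F : Cᵒᵖ × C ⥤ C) where
  A : C
  B : C
  f : Fobj F B A ⟶ A
  g : B ⟶ Fobj F A B

/-- `(h, h')` is a morphism of dialgebras from `D₀ = (A₀, B₀, f₀, g₀)` to
`D₁ = (A₁, B₁, f₁, g₁)` when `h ∘ f₀ = f₁ ∘ F(h', h)` and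
`F(h, h') ∘ g₁ = g₀ ∘ h'`. -/
def IsDialgebraHom (F : Cᵒᵖ × C ⥤ C) (D₀ D₁ : Dialgebra F)
    (h : D₀.A ⟶ D₁.A) (h' : D₁.B ⟶ D₀.B) : Prop :=
  D₀.f ≫ h = Fmap F h' h ≫ D₁.f ∧ D₁.g ≫ Fmap F h h' = h' ≫ D₀.g

/-- A dialgebra is initial when it admits exactly one dialgebra morphism to
every dialgebra for `F`. -/
def IsInitialDialgebra (F : Cᵒᵖ × C ⥤ C) (D : Dialgebra F) : Prop :=
  ∀ E : Dialgebra F, ∃! p : (D.A ⟶ E.A) × (E.B ⟶ D.B), IsDialgebraHom F D E p.1 p.2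

lemma Fmap_id' (F : Cᵒᵖ × C ⥤ C) (B A : C) : Fmap F (𝟙 B) (𝟙 A) = 𝟙 (Fobj F B A) := by
  show F.map (𝟙 (Opposite.op B, A)) = _
  rw [F.map_id]; rfl

lemma Fmap_comp' (F : Cᵒᵖ × C ⥤ C) {B₀ B₁ B₂ A₀ A₁ A₂ : C}
    (h₁' : B₁ ⟶ B₀) (h₁ : A₀ ⟶ A₁) (h₂' : B₂ ⟶ B₁) (h₂ : A₁ ⟶ A₂) :
    Fmap F h₁' h₁ ≫ Fmap F h₂' h₂ = Fmap F (h₂' ≫ h₁') (h₁ ≫ h₂) := by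
  show F.map ((h₁'.op, h₁) : (Opposite.op B₀, A₀) ⟶ (Opposite.op B₁, A₁)) ≫ F.map ((h₂'.op, h₂) : (Opposite.op B₁, A₁) ⟶ (Opposite.op B₂, A₂)) = F.map (((h₂' ≫ h₁').op, h₁ ≫ h₂) : (Opposite.op B₀, A₀) ⟶ (Opposite.op B₂, A₂))
  rw [← F.map_comp]
  rfl

lemma Fmap_comp_assoc' (F : Cᵒᵖ × C ⥤ C) {B₀ B₁ B₂ A₀ A₁ A₂ X : C}
    (h₁' : B₁ ⟶ B₀) (h₁ : A₀ ⟶ A₁) (h₂' : B₂ ⟶ B₁) (h₂ : A₁ ⟶ A₂) (x : Fobj F B₂ A₂ ⟶ X) :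
    Fmap F h₁' h₁ ≫ Fmap F h₂' h₂ ≫ x = Fmap F (h₂' ≫ h₁') (h₁ ≫ h₂) ≫ x := by
  rw [← Category.assoc, Fmap_comp']

lemma dialgebraHom_id (F : Cᵒᵖ × C ⥤ C) (D : Dialgebra F) :
    IsDialgebraHom F D D (𝟙 D.A) (𝟙 D.B) := by
  constructor <;> rw [Fmap_id'] <;> simp

lemma dialgebraHom_comp {F : Cᵒᵖ × C ⥤ C} {D₀ D₁ D₂ : Dialgebra F}
    {h : D₀.A ⟶ D₁.A} {h' : D₁.B ⟶ D₀.B} {k : D₁.A ⟶ D₂.A} {k' : D₂.B ⟶ D₁.B}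
    (H1 : IsDialgebraHom F D₀ D₁ h h') (H2 : IsDialgebraHom F D₁ D₂ k k') :
    IsDialgebraHom F D₀ D₂ (h ≫ k) (k' ≫ h') := by
  obtain ⟨a1, a2⟩ := H1
  obtain ⟨b1, b2⟩ := H2
  constructor
  · rw [← Fmap_comp', Category.assoc, ← b1, ← Category.assoc, a1, Category.assoc]
  · rw [← Fmap_comp', ← Category.assoc, b2, Category.assoc, a2, ← Category.assoc]

/-- Suppose `(A, B, f, g)` is an initial dialgebra for `F` in which `f` and
`g` are isomorphisms, and the swapped quadruple `(B, A, g⁻¹, f⁻¹)` is also an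
initial dialgebra.  Then the unique dialgebra morphism `(h, h')` from
`(A, B, f, g)` to `(B, A, g⁻¹, f⁻¹)` satisfies `h = h'`, `h` is an
isomorphism, and `i := f ∘ F(h⁻¹, 𝟙_A) : F(A, A) ⟶ A` is an isomorphism such
that `(A, A, i, i⁻¹)` is an initial dialgebra for `F`; in particular
`F(A, A) ≅ A`. -/
theorem initial_dialgebra_fixed_point
    {C : Type u} [Category.{v} C] (F : Cᵒᵖ × C ⥤ C)
    (A B : C) (f : Fobj F B A ⟶ A) (g : B ⟶ Fobj F A B)
    [IsIso f] [IsIso g]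
    (hD : IsInitialDialgebra F ⟨A, B, f, g⟩)
    (hD' : IsInitialDialgebra F ⟨B, A, inv g, inv f⟩) :
    (∀ h h' : A ⟶ B,
      IsDialgebraHom F ⟨A, B, f, g⟩ ⟨B, A, inv g, inv f⟩ h h' →
        h = h' ∧
        ∃ hinv : B ⟶ A, h ≫ hinv = 𝟙 A ∧ hinv ≫ h = 𝟙 B ∧
          ∃ i' : A ⟶ Fobj F A A,
            (Fmap F hinv (𝟙 A) ≫ f) ≫ i' = 𝟙 (Fobj F A A) ∧
            i' ≫ (Fmap F hinv (𝟙 A) ≫ f) = 𝟙 A ∧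
            IsInitialDialgebra F ⟨A, A, Fmap F hinv (𝟙 A) ≫ f, i'⟩) ∧
    Nonempty (Fobj F A A ≅ A) := by
  have main : ∀ h h' : A ⟶ B,
      IsDialgebraHom F ⟨A, B, f, g⟩ ⟨B, A, inv g, inv f⟩ h h' →
        h = h' ∧
        ∃ hinv : B ⟶ A, h ≫ hinv = 𝟙 A ∧ hinv ≫ h = 𝟙 B ∧
          ∃ i' : A ⟶ Fobj F A A,
            (Fmap F hinv (𝟙 A) ≫ f) ≫ i' = 𝟙 (Fobj F A A) ∧
            i' ≫ (Fmap F hinv (𝟙 A) ≫ f) = 𝟙 A ∧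
            IsInitialDialgebra F ⟨A, A, Fmap F hinv (𝟙 A) ≫ f, i'⟩ := by
    intro h h' hhom
    -- hhom.1 : f ≫ h = Fmap F h' h ≫ inv g
    -- hhom.2 : inv f ≫ Fmap F h h' = h' ≫ g
    have c1 : f ≫ h' = Fmap F h h' ≫ inv g := by
      rw [IsIso.eq_comp_inv, Category.assoc]
      exact ((IsIso.inv_comp_eq f).mp hhom.2).symm
    have c2 : inv f ≫ Fmap F h' h = h ≫ g := by
      rw [IsIso.inv_comp_eq]
      have := hhom.1
      rw [IsIso.eq_comp_inv] at this
      rw [← this, Category.assoc]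
    have hhom2 : IsDialgebraHom F ⟨A, B, f, g⟩ ⟨B, A, inv g, inv f⟩ h' h := ⟨c1, c2⟩
    obtain ⟨p, hp, hup⟩ := hD ⟨B, A, inv g, inv f⟩
    have hh' : h = h' := by
      have e1 := hup (h, h') hhom
      have e2 := hup (h', h) hhom2
      have := e1.trans e2.symm
      exact congrArg Prod.fst this
    subst hh'
    obtain ⟨q, hq, _⟩ := hD' ⟨A, B, f, g⟩
    -- hq : IsDialgebraHom F ⟨B,A,inv g,inv f⟩ ⟨A,B,f,g⟩ q.1 q.2
    obtain ⟨r, _, hur⟩ := hD ⟨A, B, f, g⟩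
    have eD : ((h ≫ q.1, q.2 ≫ h) : (A ⟶ A) × (B ⟶ B)) = (𝟙 A, 𝟙 B) := by
      have e1 := hur (h ≫ q.1, q.2 ≫ h) (dialgebraHom_comp hhom hq)
      have e2 := hur (𝟙 A, 𝟙 B) (dialgebraHom_id F ⟨A, B, f, g⟩)
      exact e1.trans e2.symm
    obtain ⟨s, _, hus⟩ := hD' ⟨B, A, inv g, inv f⟩
    have eD' : ((q.1 ≫ h, h ≫ q.2) : (B ⟶ B) × (A ⟶ A)) = (𝟙 B, 𝟙 A) := by
      have e1 := hus (q.1 ≫ h, h ≫ q.2) (dialgebraHom_comp hq hhom)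
      have e2 := hus (𝟙 B, 𝟙 A) (dialgebraHom_id F ⟨B, A, inv g, inv f⟩)
      exact e1.trans e2.symm
    have hk : h ≫ q.1 = 𝟙 A := congrArg Prod.fst eD
    have hk' : q.2 ≫ h = 𝟙 B := congrArg Prod.snd eD
    have hkB : q.1 ≫ h = 𝟙 B := congrArg Prod.fst eD'
    have hk2 : h ≫ q.2 = 𝟙 A := congrArg Prod.snd eD'
    have kk' : q.2 = q.1 := by
      calc q.2 = q.2 ≫ (h ≫ q.1) := by rw [hk, Category.comp_id]
        _ = (q.2 ≫ h) ≫ q.1 := by rw [Category.assoc]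
        _ = q.1 := by rw [hk', Category.id_comp]
    set k := q.1 with hkdef
    refine ⟨rfl, k, hk, hkB, inv f ≫ Fmap F h (𝟙 A), ?_, ?_, ?_⟩
    · simp only [Category.assoc, IsIso.hom_inv_id_assoc, Fmap_comp', Fmap_comp_assoc',
        hk, Category.id_comp, Category.comp_id, Fmap_id']
    · simp only [Category.assoc, Fmap_comp', Fmap_comp_assoc', hkB,
        Category.id_comp, Category.comp_id, Fmap_id', IsIso.inv_hom_id]
    · -- initiality of E₀ := ⟨A, A, Fmap F k 𝟙 ≫ f, i'⟩
      set i' := inv f ≫ Fmap F h (𝟙 A) with hi'def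
      have φ : IsDialgebraHom F ⟨A, A, Fmap F k (𝟙 A) ≫ f, i'⟩ ⟨A, B, f, g⟩ (𝟙 A) k := by
        constructor
        · rw [Category.comp_id]
        · show g ≫ Fmap F (𝟙 A) k = k ≫ i'
          have h2 : g ≫ Fmap F q.1 q.2 = q.2 ≫ inv f := hq.2
          rw [kk'] at h2
          rw [hi'def, ← Category.assoc, ← h2, Category.assoc, Fmap_comp', hk]
          simp
      have ψ : IsDialgebraHom F ⟨A, B, f, g⟩ ⟨A, A, Fmap F k (𝟙 A) ≫ f, i'⟩ (𝟙 A) h := by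
        constructor
        · show f ≫ 𝟙 A = Fmap F h (𝟙 A) ≫ Fmap F k (𝟙 A) ≫ f
          rw [Fmap_comp_assoc', hkB]
          simp [Fmap_id']
        · show i' ≫ Fmap F (𝟙 A) h = h ≫ g
          rw [hi'def, Category.assoc, Fmap_comp']
          simp only [Category.id_comp]
          exact hhom.2
      intro E
      obtain ⟨p, hp, hupE⟩ := hD E
      refine ⟨(p.1, p.2 ≫ k), ?_, ?_⟩
      · have := dialgebraHom_comp φ hp
        rwa [Category.id_comp] at this
      · rintro ⟨y1, y2⟩ hy
        have comp := dialgebraHom_comp ψ hy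
        rw [Category.id_comp] at comp
        have := hupE (y1, y2 ≫ h) comp
        have ey1 : y1 = p.1 := congrArg Prod.fst this
        have ey2 : y2 ≫ h = p.2 := congrArg Prod.snd this
        have : y2 = p.2 ≫ k := by
          calc y2 = y2 ≫ (h ≫ k) := by rw [hk, Category.comp_id]
            _ = (y2 ≫ h) ≫ k := by rw [Category.assoc]
            _ = p.2 ≫ k := by rw [ey2]
        exact Prod.ext ey1 this
  refine ⟨main, ?_⟩
  obtain ⟨p, hp, _⟩ := hD ⟨B, A, inv g, inv f⟩
  obtain ⟨_, hinv, hk, hkB, i', hi1, hi2, _⟩ := main p.1 p.2 hp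
  exact ⟨⟨Fmap F hinv (𝟙 A) ≫ f, i', hi1, hi2⟩⟩
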